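/- Let f: 𝕋×ℝ → ℝ be derivable, let μ ∈ M(𝕋×ℝ), and let W_ε(θ) := ∫₀^{θ̄} h_ε(θ') dθ' be the primitive of the regularized even-primitive kernel, where h_ε(θ) = sin(θ)/(ε² + |θ|_o²)^α. Then W_ε is 2π-periodic, nonnegative, vanishes exactly on 2πℤ, is a primitive of h_ε, and for α ∈ (1/2, 1) there is a constant M_{α,p} independent of ε such that ‖W_ε‖_{W^{1,p}(𝕋)} ≤ M_{α,p} for every 1 ≤ p < 1/(2α - 1). -/

import Mathlib

/-!
On `[0, π]` the kernel `h_ε` is nonnegative (positive inside) and bounded by `t ^ (1 - 2α)`,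
uniformly in `ε`. Since `h_ε` is odd and `2π`-periodic, its integral over a period vanishes, so
`θ ↦ ∫₀^θ h_ε` is periodic and agrees with `W_ε`; and `W_ε(θ) = ∫₀^{|θ̄|} h_ε`, which gives
positivity off `2πℤ` together with the uniform bound `0 ≤ W_ε ≤ ∫₀^π t ^ (1 - 2α)`. The `L^p`
bound for `h_ε` follows from the pointwise bound, integrable near `0` as `(1 - 2α) p > -1`.
-/

open intervalIntegral

/-- Representative of `θ` modulo `2π` in the interval `(-π, π]`. -/
noncomputable def rep (θ : ℝ) : ℝ := toIocMod Real.two_pi_pos (-Real.pi) θ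

/-- Orthodromic distance `|θ|_o`. -/
noncomputable def ortho (θ : ℝ) : ℝ := |rep θ|

/-- The regularized kernel `h_ε(θ) = sin θ / (ε² + |θ|_o²)^α`. -/
noncomputable def heps (α ε θ : ℝ) : ℝ :=
  Real.sin θ / (ε ^ 2 + (ortho θ) ^ 2) ^ α

/-- The primitive `W_ε(θ) = ∫₀^{θ̄} h_ε(θ') dθ'` of the regularized kernel. -/
noncomputable def Weps (α ε θ : ℝ) : ℝ := ∫ t in (0:ℝ)..(rep θ), heps α ε t

open Real Set MeasureTheory Function

section OddPeriodic

variable {E : Type*} [NormedAddCommGroup E] [NormedSpace ℝ E] {f : ℝ → E} {T : ℝ}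

theorem Function.Odd.intervalIntegral_zero_neg (hf : f.Odd) (b : ℝ) :
    ∫ x in (0:ℝ)..-b, f x = ∫ x in (0:ℝ)..b, f x := by
  have h := integral_comp_neg (a := 0) (b := b) f
  simp only [hf _, intervalIntegral.integral_neg, neg_zero] at h
  rw [integral_symm, ← h, neg_neg]

theorem Function.Odd.intervalIntegral_neg_self (hf : f.Odd) (a : ℝ) :
    ∫ x in -a..a, f x = 0 := by
  have h := integral_comp_neg (a := -a) (b := a) f
  simp only [hf _, intervalIntegral.integral_neg, neg_neg] at h
  have h2 : (2 : ℝ) • ∫ x in -a..a, f x = 0 := by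
    nth_rewrite 1 [two_smul, ← h]
    exact neg_add_cancel _
  exact (smul_eq_zero.1 h2).resolve_left two_ne_zero

theorem Function.Even.intervalIntegral_neg_self (hf : f.Even) {a : ℝ}
    (hint : ∀ b c, IntervalIntegrable f volume b c) :
    ∫ x in -a..a, f x = (2 : ℝ) • ∫ x in (0:ℝ)..a, f x := by
  have h := integral_comp_neg (a := 0) (b := a) f
  simp only [hf _, neg_zero] at h
  rw [← integral_add_adjacent_intervals (hint (-a) 0) (hint 0 a), ← h, two_smul]

theorem Function.Periodic.intervalIntegral_eq_zero_of_odd (hf : Periodic f T) (hodd : f.Odd) :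
    ∫ x in (0:ℝ)..T, f x = 0 := by
  have h := hf.intervalIntegral_add_eq 0 (-(T / 2))
  rw [zero_add, show -(T / 2) + T = T / 2 by ring] at h
  rw [h, hodd.intervalIntegral_neg_self]

theorem Function.Periodic.primitive_periodic (hf : Periodic f T)
    (hint : ∀ a b, IntervalIntegrable f volume a b) (h0 : ∫ x in (0:ℝ)..T, f x = 0) :
    Periodic (fun x => ∫ t in (0:ℝ)..x, f t) T := fun x => by
  dsimp only
  rw [← integral_add_adjacent_intervals (hint 0 x) (hint x (x + T)),
    hf.intervalIntegral_add_eq x 0, zero_add, h0, add_zero]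

end OddPeriodic

lemma rep_mem (θ : ℝ) : rep θ ∈ Ioc (-π) π := by
  rw [rep]
  simpa [show -π + 2 * π = π by ring] using toIocMod_mem_Ioc two_pi_pos (-π) θ

lemma rep_eq_self {θ : ℝ} (h : θ ∈ Ioc (-π) π) : rep θ = θ := by
  rwa [rep, toIocMod_eq_self, show -π + 2 * π = π by ring]

lemma abs_rep_le_pi (θ : ℝ) : |rep θ| ≤ π :=
  abs_le.2 ⟨(rep_mem θ).1.le, (rep_mem θ).2⟩

lemma rep_periodic : Periodic rep (2 * π) :=
  toIocMod_periodic two_pi_pos (-π)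

lemma Function.Periodic.comp_rep {β : Type*} {g : ℝ → β} (hg : Periodic g (2 * π)) (θ : ℝ) :
    g (rep θ) = g θ := by
  rw [rep, ← self_sub_toIocDiv_zsmul, hg.sub_zsmul_eq]

lemma rep_eq_zero_iff (θ : ℝ) : rep θ = 0 ↔ ∃ k : ℤ, θ = 2 * π * k := by
  rw [rep, toIocMod_eq_iff]
  simp only [zero_add, zsmul_eq_mul, mul_comm (2 * π)]
  exact and_iff_right ⟨by linarith [pi_pos], by linarith [pi_pos]⟩

lemma ortho_eq_norm (θ : ℝ) : ortho θ = ‖(θ : AddCircle (2 * π))‖ := by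
  have hcoe : Periodic (fun x : ℝ => (x : AddCircle (2 * π))) (2 * π) :=
    AddCircle.coe_add_period (2 * π)
  rw [← hcoe.comp_rep θ, ortho, eq_comm, AddCircle.norm_coe_eq_abs_iff (p := 2 * π) two_pi_pos.ne',
    abs_of_pos two_pi_pos]
  simpa using abs_rep_le_pi θ

lemma continuous_ortho : Continuous ortho := by
  rw [funext ortho_eq_norm]
  exact continuous_norm.comp (AddCircle.continuous_mk' (2 * π))

lemma ortho_neg (θ : ℝ) : ortho (-θ) = ortho θ := by
  rw [ortho_eq_norm, ortho_eq_norm θ, AddCircle.coe_neg, norm_neg]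

lemma ortho_eq_self {t : ℝ} (h0 : 0 ≤ t) (hπ : t ≤ π) : ortho t = t := by
  rw [ortho, rep_eq_self ⟨by linarith [pi_pos], hπ⟩, abs_of_nonneg h0]

section Kernel

variable {α ε : ℝ}

lemma heps_periodic : Periodic (heps α ε) (2 * π) := fun θ => by
  rw [heps, heps, sin_periodic θ, ortho, ortho, rep_periodic θ]

lemma heps_odd : (heps α ε).Odd := fun θ => by
  rw [heps, heps, sin_neg, ortho_neg, neg_div]

lemma continuous_heps (hε : 0 < ε) : Continuous (heps α ε) := by
  have hpos : ∀ θ, 0 < ε ^ 2 + ortho θ ^ 2 := fun θ => by positivity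
  exact continuous_sin.div ((continuous_const.add (continuous_ortho.pow 2)).rpow_const
    fun θ => Or.inl (hpos θ).ne') fun θ => (rpow_pos_of_pos (hpos θ) α).ne'

lemma heps_nonneg {t : ℝ} (h0 : 0 ≤ t) (hπ : t ≤ π) : 0 ≤ heps α ε t :=
  div_nonneg (sin_nonneg_of_nonneg_of_le_pi h0 hπ) (rpow_nonneg (by positivity) α)

lemma heps_pos (hε : 0 < ε) {t : ℝ} (h0 : 0 < t) (hπ : t < π) : 0 < heps α ε t :=
  div_pos (sin_pos_of_pos_of_lt_pi h0 hπ) (rpow_pos_of_pos (by positivity) α)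

lemma heps_le_rpow (hα : 0 ≤ α) {t : ℝ} (h0 : 0 ≤ t) (hπ : t ≤ π) :
    heps α ε t ≤ t ^ (1 - 2 * α) := by
  rcases h0.eq_or_lt with rfl | ht
  · simpa [heps] using rpow_nonneg le_rfl _
  have hden : t ^ (2 * α) ≤ (ε ^ 2 + t ^ 2) ^ α := by
    rw [rpow_mul h0, rpow_two]
    exact rpow_le_rpow (by positivity) (le_add_of_nonneg_left (sq_nonneg ε)) hα
  rw [heps, ortho_eq_self h0 hπ, rpow_sub ht, rpow_one]
  exact div_le_div₀ h0 (sin_le h0) (rpow_pos_of_pos ht _) hden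

end Kernel

section Primitive

variable {α ε : ℝ}

lemma Weps_periodic : Periodic (Weps α ε) (2 * π) := fun θ => by
  rw [Weps, Weps, rep_periodic θ]

lemma Weps_eq_primitive (hε : 0 < ε) :
    Weps α ε = fun θ => ∫ t in (0:ℝ)..θ, heps α ε t := by
  have hint : ∀ a b, IntervalIntegrable (heps α ε) volume a b :=
    (continuous_heps hε).intervalIntegrable
  funext θ
  exact (heps_periodic.primitive_periodic hint
    (heps_periodic.intervalIntegral_eq_zero_of_odd heps_odd)).comp_rep θ

lemma Weps_hasDerivAt (hε : 0 < ε) (θ : ℝ) : HasDerivAt (Weps α ε) (heps α ε θ) θ := by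
  rw [Weps_eq_primitive hε]
  exact ((continuous_heps hε).integral_hasStrictDerivAt 0 θ).hasDerivAt

lemma Weps_eq_integral_abs_rep (θ : ℝ) : Weps α ε θ = ∫ t in (0:ℝ)..|rep θ|, heps α ε t := by
  rcases abs_cases (rep θ) with ⟨h, _⟩ | ⟨h, _⟩
  · rw [Weps, h]
  · rw [Weps, h, heps_odd.intervalIntegral_zero_neg]

lemma Weps_pos (hε : 0 < ε) {θ : ℝ} (h : rep θ ≠ 0) : 0 < Weps α ε θ := by
  rw [Weps_eq_integral_abs_rep]
  exact intervalIntegral_pos_of_pos_on ((continuous_heps hε).intervalIntegrable _ _)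
    (fun t ht => heps_pos hε ht.1 (ht.2.trans_le (abs_rep_le_pi θ))) (abs_pos.2 h)

lemma Weps_eq_zero_iff (hε : 0 < ε) (θ : ℝ) : Weps α ε θ = 0 ↔ ∃ k : ℤ, θ = 2 * π * k := by
  rw [← rep_eq_zero_iff]
  refine ⟨fun hW => by_contra fun h => (Weps_pos hε h).ne' hW, fun h => ?_⟩
  rw [Weps, h, integral_same]

lemma Weps_nonneg (θ : ℝ) : 0 ≤ Weps α ε θ := by
  rw [Weps_eq_integral_abs_rep]
  exact integral_nonneg (abs_nonneg _) fun t ht => heps_nonneg ht.1 (ht.2.trans (abs_rep_le_pi θ))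

lemma Weps_le_integral_rpow (hε : 0 < ε) (hα : α ∈ Ioo (0:ℝ) 1) (θ : ℝ) :
    Weps α ε θ ≤ ∫ t in (0:ℝ)..π, t ^ (1 - 2 * α) := by
  have hcont := continuous_heps (α := α) hε
  have hπ := abs_rep_le_pi θ
  calc Weps α ε θ = ∫ t in (0:ℝ)..|rep θ|, heps α ε t := Weps_eq_integral_abs_rep θ
    _ ≤ ∫ t in (0:ℝ)..π, heps α ε t := by
        rw [← integral_add_adjacent_intervals (hcont.intervalIntegrable 0 |rep θ|)
          (hcont.intervalIntegrable |rep θ| π), le_add_iff_nonneg_right]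
        exact integral_nonneg hπ fun t ht =>
          heps_nonneg ((abs_nonneg _).trans ht.1) ht.2
    _ ≤ ∫ t in (0:ℝ)..π, t ^ (1 - 2 * α) :=
        integral_mono_on pi_pos.le (hcont.intervalIntegrable 0 π)
          (intervalIntegrable_rpow' (by linarith [hα.2]))
          fun t ht => heps_le_rpow hα.1.le ht.1 ht.2

end Primitive

section SobolevBound

variable {α ε p : ℝ}

lemma integral_abs_Weps_rpow_le (hε : 0 < ε) (hα : α ∈ Ioo (0:ℝ) 1) (hp : 0 ≤ p) :
    ∫ θ in (-π)..π, |Weps α ε θ| ^ p ≤ 2 * π * (∫ t in (0:ℝ)..π, t ^ (1 - 2 * α)) ^ p := by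
  have hcont : Continuous fun θ => |Weps α ε θ| ^ p :=
    (continuous_iff_continuousAt.2 fun θ => (Weps_hasDerivAt hε θ).continuousAt).abs.rpow_const
      fun _ => Or.inr hp
  calc ∫ θ in (-π)..π, |Weps α ε θ| ^ p
      ≤ ∫ _ in (-π)..π, (∫ t in (0:ℝ)..π, t ^ (1 - 2 * α)) ^ p :=
        integral_mono_on (by linarith [pi_pos]) (hcont.intervalIntegrable _ _)
          intervalIntegrable_const fun θ _ => by
            rw [abs_of_nonneg (Weps_nonneg θ)]
            exact rpow_le_rpow (Weps_nonneg θ) (Weps_le_integral_rpow hε hα θ) hp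
    _ = 2 * π * (∫ t in (0:ℝ)..π, t ^ (1 - 2 * α)) ^ p := by
        rw [intervalIntegral.integral_const, smul_eq_mul]
        ring

lemma integral_abs_heps_rpow_le (hε : 0 < ε) (hα : 0 ≤ α) (hp : 0 ≤ p)
    (hs : -1 < (1 - 2 * α) * p) :
    ∫ θ in (-π)..π, |heps α ε θ| ^ p ≤ 2 * ∫ t in (0:ℝ)..π, t ^ ((1 - 2 * α) * p) := by
  have hcont : Continuous fun θ => |heps α ε θ| ^ p :=
    (continuous_heps hε).abs.rpow_const fun _ => Or.inr hp
  have heven : (fun θ => |heps α ε θ| ^ p).Even := fun θ => by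
    simp only [heps_odd θ, abs_neg]
  rw [heven.intervalIntegral_neg_self hcont.intervalIntegrable, smul_eq_mul]
  gcongr
  refine integral_mono_on pi_pos.le (hcont.intervalIntegrable 0 π)
    (intervalIntegrable_rpow' hs) fun t ht => ?_
  rw [abs_of_nonneg (heps_nonneg ht.1 ht.2), rpow_mul ht.1]
  exact rpow_le_rpow (heps_nonneg ht.1 ht.2) (heps_le_rpow hα ht.1 ht.2) hp

end SobolevBound

theorem stmt17_general (α : ℝ) (ε : ℝ) (hε : 0 < ε) :
    Function.Periodic (Weps α ε) (2 * Real.pi)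
    ∧ (∀ θ, 0 ≤ Weps α ε θ)
    ∧ (∀ θ, Weps α ε θ = 0 ↔ ∃ k : ℤ, θ = 2 * Real.pi * k)
    ∧ (∀ θ, HasDerivAt (Weps α ε) (heps α ε θ) θ)
    ∧ (α ∈ Set.Ioo (1/2 : ℝ) 1 → ∀ p : ℝ, 1 ≤ p → p < 1 / (2 * α - 1) →
        ∃ M : ℝ, ∀ ε' > (0:ℝ),
          (∫ θ in (-Real.pi)..Real.pi, |Weps α ε' θ| ^ p)
            + (∫ θ in (-Real.pi)..Real.pi, |heps α ε' θ| ^ p) ≤ M) := by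
  refine ⟨Weps_periodic, Weps_nonneg, Weps_eq_zero_iff hε, Weps_hasDerivAt hε,
    fun ⟨hα₁, hα₂⟩ p hp hpα => ?_⟩
  have hα : α ∈ Ioo (0:ℝ) 1 := ⟨by linarith, hα₂⟩
  have hs : -1 < (1 - 2 * α) * p := by
    have := (lt_div_iff₀ (by linarith : 0 < 2 * α - 1)).1 hpα
    linarith
  exact ⟨_, fun ε' hε' => add_le_add (integral_abs_Weps_rpow_le hε' hα (by linarith))
    (integral_abs_heps_rpow_le hε' hα.1.le (by linarith) hs)⟩

/-- `W_ε` is `2π`-periodic, nonnegative, vanishes exactly on `2πℤ`, and is a primitive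
of `h_ε`; moreover, for `α ∈ (1/2, 1)` and `1 ≤ p < 1/(2α-1)` there is a constant
`M_{α,p}` independent of `ε` bounding the `W^{1,p}(𝕋)`-norm of `W_ε` (i.e. the
`L^p`-norms over one period of `W_ε` and of its derivative `h_ε`). -/
theorem stmt17 (α : ℝ) (hα : α ∈ Set.Ioo (0:ℝ) 1) (ε : ℝ) (hε : 0 < ε) :
    Function.Periodic (Weps α ε) (2 * Real.pi)
    ∧ (∀ θ, 0 ≤ Weps α ε θ)
    ∧ (∀ θ, Weps α ε θ = 0 ↔ ∃ k : ℤ, θ = 2 * Real.pi * k)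
    ∧ (∀ θ, HasDerivAt (Weps α ε) (heps α ε θ) θ)
    ∧ (α ∈ Set.Ioo (1/2 : ℝ) 1 → ∀ p : ℝ, 1 ≤ p → p < 1 / (2 * α - 1) →
        ∃ M : ℝ, ∀ ε' > (0:ℝ),
          (∫ θ in (-Real.pi)..Real.pi, |Weps α ε' θ| ^ p)
            + (∫ θ in (-Real.pi)..Real.pi, |heps α ε' θ| ^ p) ≤ M) :=
  stmt17_general α ε hε
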